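/- Let L be a recognizable subset and K a rational subset of a monoid M. Then L ∩ K is a rational subset of M. -/

import Mathlib

open Pointwise

/-!
If `φ : M →* N` with `N` finite recognizes `L`, then `L ∩ K = φ⁻¹(φ L) ∩ K`, so it suffices to
show, by induction on the rational set `K`, that `φ⁻¹ P ∩ K` is rational for every `P ⊆ N`.
Unions are immediate and products split along the finitely many values of `φ`. For a star,
`φ⁻¹ {q} ∩ S*` is the set of labels of paths from `1` to `q` in the finite automaton with
states `N` and transitions `p → p * φ s` labelled by `s ∈ S`; Kleene's state-elimination
argument (McNaughton–Yamada) expresses these label sets rationally in terms of the sets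
`φ⁻¹ P ∩ S`, which are rational by induction.
-/

/-- The rational subsets of a monoid `M`: the smallest family of subsets
containing all finite subsets and closed under union, product, and Kleene star
(the submonoid generated by a set). -/
inductive IsRat {M : Type*} [Monoid M] : Set M → Prop
  | finite (S : Set M) : S.Finite → IsRat S
  | union {S T : Set M} : IsRat S → IsRat T → IsRat (S ∪ T)
  | mul {S T : Set M} : IsRat S → IsRat T → IsRat (S * T)
  | star {S : Set M} : IsRat S → IsRat (Submonoid.closure S : Set M)

/-- A subset `L` of a monoid `M` is recognizable if it is saturated by a
homomorphism to some finite monoid. -/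
def IsRec {M : Type*} [Monoid M] (L : Set M) : Prop :=
  ∃ (N : Type) (_ : Monoid N) (_ : Finite N) (φ : M →* N), φ ⁻¹' (φ '' L) = L

namespace IsRat

variable {M : Type*} [Monoid M]

lemma empty : IsRat (∅ : Set M) := .finite ∅ Set.finite_empty

lemma biUnion {ι : Type*} {s : Set ι} (hs : s.Finite) {f : ι → Set M}
    (h : ∀ i ∈ s, IsRat (f i)) : IsRat (⋃ i ∈ s, f i) := by
  induction s, hs using Set.Finite.induction_on with
  | empty => simpa using IsRat.empty
  | insert _ _ ih =>
    rw [Set.biUnion_insert]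
    exact (h _ (Set.mem_insert _ _)).union (ih fun i hi => h i (Set.mem_insert_of_mem _ hi))

lemma iUnion {ι : Type*} [Finite ι] {f : ι → Set M} (h : ∀ i, IsRat (f i)) :
    IsRat (⋃ i, f i) := by
  simpa using biUnion Set.finite_univ fun i _ => h i

end IsRat

section Automaton

variable {M N : Type*} [Monoid M] [Monoid N] {φ : M →* N} {S : Set M}

/-- In the automaton with states `N` and a transition `p → p * φ s` labelled by each `s ∈ S`,
`LabelledWalk φ S A p q m` says that some nonempty walk from `p` to `q` whose interior states all
lie in `A` has label product `m`. -/
inductive LabelledWalk (φ : M →* N) (S : Set M) (A : Set N) : N → N → M → Prop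
  | single {p : N} {s : M} : s ∈ S → LabelledWalk φ S A p (p * φ s) s
  | cons {p q : N} {s m : M} : s ∈ S → p * φ s ∈ A →
      LabelledWalk φ S A (p * φ s) q m → LabelledWalk φ S A p q (s * m)

def walkLabels (φ : M →* N) (S : Set M) (A : Set N) (p q : N) : Set M :=
  {m | LabelledWalk φ S A p q m}

def pathLabels (φ : M →* N) (S : Set M) (A : Set N) (p q : N) : Set M :=
  {m | p = q ∧ m = 1} ∪ walkLabels φ S A p q

namespace LabelledWalk

variable {A B : Set N} {p q t : N} {m m' : M}

lemma mul_map_eq (h : LabelledWalk φ S A p q m) : p * φ m = q := by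
  induction h with
  | single _ => rfl
  | cons _ _ _ ih => rw [map_mul, ← mul_assoc, ih]

lemma mem_closure (h : LabelledWalk φ S A p q m) : m ∈ Submonoid.closure S := by
  induction h with
  | single hs => exact Submonoid.subset_closure hs
  | cons hs _ _ ih => exact mul_mem (Submonoid.subset_closure hs) ih

lemma mono (hAB : A ⊆ B) (h : LabelledWalk φ S A p q m) : LabelledWalk φ S B p q m := by
  induction h with
  | single hs => exact .single hs
  | cons hs hA _ ih => exact .cons hs (hAB hA) ih

lemma append (h : LabelledWalk φ S A p q m) (hq : q ∈ A) (h' : LabelledWalk φ S A q t m') :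
    LabelledWalk φ S A p t (m * m') := by
  induction h with
  | single hs => exact .cons hs hq h'
  | cons hs hA _ ih => rw [mul_assoc]; exact .cons hs hA (ih hq h')

end LabelledWalk

lemma walkLabels_empty (p q : N) :
    walkLabels φ S ∅ p q = φ ⁻¹' {b | p * b = q} ∩ S := by
  ext m
  constructor
  · rintro (⟨hs⟩ | ⟨_, h, _⟩)
    · exact ⟨rfl, hs⟩
    · exact absurd h (Set.notMem_empty _)
  · rintro ⟨hq, hs⟩
    rw [← show p * φ m = q from hq]
    exact .single hs

lemma walkLabels_insert_subset (A : Set N) (r p q : N) :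
    walkLabels φ S (insert r A) p q ⊆ walkLabels φ S A p q ∪
      walkLabels φ S A p r * Submonoid.closure (walkLabels φ S A r r) *
        pathLabels φ S A r q := by
  intro m h
  induction h with
  | single hs => exact Or.inl (.single hs)
  | @cons p q s m hs hA _ ih =>
    rcases hA with hr | hA
    · -- the walk enters `r` after its first letter: split the rest into loops at `r` and an exit
      rw [hr] at ih
      have hm : m ∈ (Submonoid.closure (walkLabels φ S A r r) : Set M) *
          pathLabels φ S A r q := by
        rcases ih with h | ⟨_, ⟨a, ha, c, hc, rfl⟩, b, hb, rfl⟩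
        · exact ⟨1, one_mem _, m, Or.inr h, one_mul m⟩
        · exact Set.mul_mem_mul (mul_mem (Submonoid.subset_closure ha) hc) hb
      right
      rw [mul_assoc]
      exact Set.mul_mem_mul (show s ∈ walkLabels φ S A p r from hr ▸ .single hs) hm
    · rcases ih with h | ⟨_, ⟨a, ha, c, hc, rfl⟩, b, hb, rfl⟩
      · exact Or.inl (.cons hs hA h)
      · right
        rw [← mul_assoc, ← mul_assoc]
        exact Set.mul_mem_mul (Set.mul_mem_mul (.cons hs hA ha) hc) hb

lemma subset_walkLabels_insert (A : Set N) (r p q : N) :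
    walkLabels φ S A p q ∪
      walkLabels φ S A p r * Submonoid.closure (walkLabels φ S A r r) * pathLabels φ S A r q ⊆
      walkLabels φ S (insert r A) p q := by
  have hA : A ⊆ insert r A := Set.subset_insert r A
  rintro _ (h | ⟨_, ⟨a, ha, c, hc, rfl⟩, b, hb, rfl⟩)
  · exact h.mono hA
  · have hac : LabelledWalk φ S (insert r A) p r (a * c) := by
      induction hc using Submonoid.closure_induction_right with
      | one => simpa using ha.mono hA
      | mul_right c _ d hd ih => rw [← mul_assoc]; exact ih.append (.inl rfl) (hd.mono hA)
    rcases hb with ⟨rfl, rfl⟩ | hb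
    · simp only [mul_one]; exact hac
    · exact hac.append (.inl rfl) (hb.mono hA)

/-- Kleene's recursion: a walk through `r` splits at its first and last visits to `r`. -/
lemma walkLabels_insert (A : Set N) (r p q : N) :
    walkLabels φ S (insert r A) p q = walkLabels φ S A p q ∪
      walkLabels φ S A p r * Submonoid.closure (walkLabels φ S A r r) * pathLabels φ S A r q :=
  (walkLabels_insert_subset A r p q).antisymm (subset_walkLabels_insert A r p q)

lemma isRat_pathLabels {A : Set N} {p q : N} (h : IsRat (walkLabels φ S A p q)) :
    IsRat (pathLabels φ S A p q) :=
  (IsRat.finite _ ((Set.finite_singleton 1).subset fun _ hm => hm.2)).union h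

lemma isRat_walkLabels [Finite N] (hS : ∀ P : Set N, IsRat (φ ⁻¹' P ∩ S)) (A : Set N)
    (p q : N) :
    IsRat (walkLabels φ S A p q) := by
  induction A, A.toFinite using Set.Finite.induction_on generalizing p q with
  | empty => rw [walkLabels_empty]; exact hS _
  | @insert r A _ _ ih =>
    rw [walkLabels_insert]
    exact (ih p q).union (((ih p r).mul (ih r r).star).mul (isRat_pathLabels (ih r q)))

lemma mem_pathLabels_univ {m : M} (hm : m ∈ Submonoid.closure S) (p : N) :
    m ∈ pathLabels φ S Set.univ p (p * φ m) := by
  induction hm using Submonoid.closure_induction_left generalizing p with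
  | one => exact Or.inl ⟨by simp, rfl⟩
  | mul_left s hs m _ ih =>
    rcases ih (p * φ s) with ⟨-, rfl⟩ | h
    · rw [mul_one]; exact Or.inr (.single hs)
    · right
      rw [map_mul, ← mul_assoc]
      exact .cons hs trivial h

lemma pathLabels_univ_one (q : N) :
    pathLabels φ S Set.univ 1 q = φ ⁻¹' {q} ∩ Submonoid.closure S := by
  ext m
  constructor
  · rintro (⟨rfl, rfl⟩ | h)
    · exact ⟨by simp, one_mem _⟩
    · exact ⟨by simpa using h.mul_map_eq, h.mem_closure⟩
  · rintro ⟨rfl, hm⟩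
    simpa using mem_pathLabels_univ (φ := φ) hm 1

lemma isRat_preimage_inter_closure [Finite N] (hS : ∀ P : Set N, IsRat (φ ⁻¹' P ∩ S))
    (P : Set N) : IsRat (φ ⁻¹' P ∩ Submonoid.closure S) := by
  rw [← Set.biUnion_preimage_singleton, Set.iUnion₂_inter]
  refine IsRat.biUnion P.toFinite fun q _ => ?_
  rw [← pathLabels_univ_one]
  exact isRat_pathLabels (isRat_walkLabels hS _ _ _)

end Automaton

lemma preimage_inter_mul_eq_iUnion {M N : Type*} [Monoid M] [Monoid N] (φ : M →* N) (P : Set N)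
    (S T : Set M) :
    φ ⁻¹' P ∩ (S * T) = ⋃ a, (φ ⁻¹' {a} ∩ S) * (φ ⁻¹' {b | a * b ∈ P} ∩ T) := by
  ext m
  simp only [Set.mem_inter_iff, Set.mem_iUnion, Set.mem_mul, Set.mem_preimage,
    Set.mem_singleton_iff, Set.mem_ofPred_eq]
  constructor
  · rintro ⟨hm, s, hs, t, ht, rfl⟩
    exact ⟨φ s, s, ⟨rfl, hs⟩, t, ⟨by rwa [← map_mul], ht⟩, rfl⟩
  · rintro ⟨_, s, ⟨rfl, hs⟩, t, ⟨ht', ht⟩, rfl⟩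
    exact ⟨by rwa [map_mul], s, hs, t, ht, rfl⟩

theorem IsRat.preimage_inter {M N : Type*} [Monoid M] [Monoid N] [Finite N] (φ : M →* N)
    {K : Set M} (hK : IsRat K) (P : Set N) : IsRat (φ ⁻¹' P ∩ K) := by
  induction hK generalizing P with
  | finite S hS => exact .finite _ (hS.inter_of_right _)
  | union _ _ ihS ihT => rw [Set.inter_union_distrib_left]; exact (ihS P).union (ihT P)
  | mul _ _ ihS ihT =>
    rw [preimage_inter_mul_eq_iUnion]
    exact .iUnion fun a => (ihS _).mul (ihT _)
  | star _ ih => exact isRat_preimage_inter_closure ih P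

/-- The intersection of a recognizable subset with a rational subset of a
monoid `M` is rational. -/
theorem stmt15 (M : Type) [Monoid M] (L K : Set M) (hL : IsRec L)
    (hK : IsRat K) : IsRat (L ∩ K) := by
  obtain ⟨N, _, _, φ, hφ⟩ := hL
  rw [← hφ]
  exact hK.preimage_inter φ _
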